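/- Let (X, d) be a continuum, μ a Whitney map on C(X), t ∈ (0, μ(X)), and let H ⊆ X be an open set such that X \ H is connected and μ(X \ H) > t. Then the set 𝓗 = {C ∈ μ⁻¹(t) : C ⊆ X \ H} is a nonempty subcontinuum of μ⁻¹(t). -/

import Mathlib

/-!
Since `Hᶜ = K` is a continuum, the set is the Whitney level `μ⁻¹(t) ∩ C(K)` of `μ`
restricted to `C(K)`, and the classical proof that Whitney levels are continua applies.
Compactness is immediate. For every continuum `F`, the members of the level containing `F`
are `ε`-chain connected for every `ε > 0`, by induction on `(t - μ F) / δ`: two such members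
`C, C'` contain members `F₁, F₂` of a slightly higher level above `F`, and a member of the
level containing `F₁ ∪ F₂` links them. So for each `x ∈ K` the members containing `x` form a
connected set; these sets cover the level and are indexed by the connected set `K`, hence the
level is connected. The intermediate values of `μ` used throughout come from boundary
bumping.
-/

open TopologicalSpace

/-- The hyperspace of nonempty subcontinua of `X`, with the Hausdorff metric
inherited from `NonemptyCompacts X`. -/
abbrev SubC (X : Type*) [MetricSpace X] :=
  {K : NonemptyCompacts X // IsConnected (K : Set X)}

/-- A Whitney map on `C(X)`: continuous, zero on singletons, and strictly
monotone with respect to proper inclusion. -/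
def IsWhitneyMap {X : Type*} [MetricSpace X] (μ : SubC X → ℝ) : Prop :=
  Continuous μ ∧ (∀ (x : X) (K : SubC X), (K.1 : Set X) = {x} → μ K = 0) ∧
    ∀ A B : SubC X, (A.1 : Set X) ⊂ (B.1 : Set X) → μ A < μ B

/-- The whole continuum `X` as an element of its hyperspace of subcontinua. -/
def wholeC (X : Type*) [MetricSpace X] [CompactSpace X] [ConnectedSpace X] [Nonempty X] :
    SubC X :=
  ⟨⟨⟨Set.univ, isCompact_univ⟩, Set.univ_nonempty⟩, isConnected_univ⟩

open Set Metric

section BoundaryBumping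

variable {α : Type*} [TopologicalSpace α]

theorem IsClosed.connectedComponentIn {F : Set α} (hF : IsClosed F) (x : α) :
    IsClosed (connectedComponentIn F x) := by
  by_cases hx : x ∈ F
  · refine isClosed_of_closure_subset <| isPreconnected_connectedComponentIn.closure
      |>.subset_connectedComponentIn (subset_closure (mem_connectedComponentIn hx)) ?_
    exact hF.closure_subset_iff.2 (connectedComponentIn_subset F x)
  · rw [connectedComponentIn_eq_empty hx]
    exact isClosed_empty

variable [T2Space α]

theorem exists_isClopen_disjoint_of_disjoint_connectedComponent [CompactSpace α] {x : α}
    {Z : Set α} (hZ : IsClosed Z) (h : Disjoint (connectedComponent x) Z) :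
    ∃ U, IsClopen U ∧ x ∈ U ∧ Disjoint U Z := by
  rw [connectedComponent_eq_iInter_isClopen, disjoint_iff_inter_eq_empty, inter_comm] at h
  obtain ⟨u, hu⟩ := hZ.isCompact.elim_finite_subfamily_closed _ (fun s => s.2.1.1) h
  refine ⟨⋂ s ∈ u, s.1, isClopen_biInter_finset fun s _ => s.2.1,
    mem_iInter₂.2 fun s _ => s.2.2, ?_⟩
  rw [disjoint_iff_inter_eq_empty, inter_comm, hu]

-- The boundary bumping theorem.
theorem IsPreconnected.connectedComponentIn_diff_nonempty {D V O : Set α} {x : α}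
    (hD : IsPreconnected D) (hV : IsCompact V) (hVD : V ⊆ D) (hO : IsOpen O)
    (hDOV : D ∩ O ⊆ V) (hDO : ¬ D ⊆ O) (hx : x ∈ V) :
    (_root_.connectedComponentIn V x \ O).Nonempty := by
  have := isCompact_iff_compactSpace.mp hV
  by_contra! hcomp
  obtain ⟨U, hU, hxU, hUO⟩ := exists_isClopen_disjoint_of_disjoint_connectedComponent
    (x := (⟨x, hx⟩ : V)) (hO.preimage continuous_subtype_val).isClosed_compl <| by
      refine disjoint_left.2 fun y hy hyO => ?_
      exact hcomp.subset ⟨connectedComponentIn_eq_image hx ▸ mem_image_of_mem _ hy, hyO⟩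
  obtain ⟨O', hO', rfl⟩ := isOpen_induced_iff.mp hU.isOpen
  have hUO' : ∀ y : V, (y : α) ∈ O' → (y : α) ∈ O := fun y hy =>
    not_not.1 (disjoint_left.1 hUO hy)
  have hUc : IsClosed (Subtype.val '' (Subtype.val ⁻¹' O' : Set V)) :=
    (hU.isClosed.isCompact.image continuous_subtype_val).isClosed
  obtain ⟨z, hzD, ⟨hzO', hzO⟩, hzU⟩ := hD (O' ∩ O) _ (hO'.inter hO) hUc.isOpen_compl
    (fun y hy => by
      by_cases hyU : y ∈ Subtype.val '' (Subtype.val ⁻¹' O' : Set V)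
      · obtain ⟨y, hyO', rfl⟩ := hyU
        exact Or.inl ⟨hyO', hUO' y hyO'⟩
      · exact Or.inr hyU)
    ⟨x, hVD hx, hxU, hUO' ⟨x, hx⟩ hxU⟩
    (by
      obtain ⟨p, hpD, hpO⟩ := not_subset.1 hDO
      exact ⟨p, hpD, fun ⟨q, hqO', hqp⟩ => hpO (hqp ▸ hUO' q hqO')⟩)
  exact hzU ⟨⟨z, hDOV ⟨hzD, hzO⟩⟩, hzO', rfl⟩

end BoundaryBumping

namespace TopologicalSpace.NonemptyCompacts

variable {α : Type*} [TopologicalSpace α] [T2Space α]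

instance : OrderClosedTopology (NonemptyCompacts α) where
  isClosed_le' := by
    simp_rw [← sup_eq_right]
    exact isClosed_eq (by fun_prop) (by fun_prop)

theorem isClosed_setOf_isPreconnected :
    IsClosed {K : NonemptyCompacts α | IsPreconnected (K : Set α)} := by
  refine isOpen_compl_iff.1 <| isOpen_iff_forall_mem_open.2 fun K hK => ?_
  simp only [mem_compl_iff, mem_ofPred_eq, IsPreconnected, not_forall] at hK
  obtain ⟨u, v, hu, hv, hKuv, ⟨a, haK, hau⟩, ⟨b, hbK, hbv⟩, huv⟩ := hK
  have hab : Disjoint ((K : Set α) \ v) ((K : Set α) \ u) :=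
    disjoint_left.2 fun x ⟨hxK, hxv⟩ ⟨_, hxu⟩ => (hKuv hxK).elim hxu hxv
  obtain ⟨U, V, hU, hV, hvU, huV, hUV⟩ := SeparatedNhds.of_isCompact_isCompact
    (K.isCompact.diff hv) (K.isCompact.diff hu) hab
  have hnot : ∀ x ∈ K, x ∈ u → x ∈ v → False := fun x hxK hxu hxv =>
    huv ⟨x, hxK, hxu, hxv⟩
  refine ⟨{L | (L : Set α) ⊆ U ∪ V} ∩ {L | ((L : Set α) ∩ U).Nonempty} ∩
      {L | ((L : Set α) ∩ V).Nonempty}, ?_, ?_, ?_⟩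
  · rintro L ⟨⟨hLUV, hLU⟩, hLV⟩ hL
    obtain ⟨z, -, hzU, hzV⟩ := hL U V hU hV hLUV hLU hLV
    exact disjoint_left.1 hUV hzU hzV
  · exact ((isOpen_subsets_of_isOpen (hU.union hV)).inter
      (isOpen_inter_nonempty_of_isOpen hU)).inter (isOpen_inter_nonempty_of_isOpen hV)
  · refine ⟨⟨fun x hxK => ?_, ⟨a, haK, hvU ⟨haK, hnot a haK hau⟩⟩⟩,
      ⟨b, hbK, huV ⟨hbK, fun hbu => hnot b hbK hbu hbv⟩⟩⟩
    by_cases hxv : x ∈ v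
    · exact Or.inr (huV ⟨hxK, fun hxu => hnot x hxK hxu hxv⟩)
    · exact Or.inl (hvU ⟨hxK, hxv⟩)

end TopologicalSpace.NonemptyCompacts

namespace SubC

variable {X : Type*} [MetricSpace X]

instance [CompactSpace X] : CompactSpace (SubC X) := by
  have : {K : NonemptyCompacts X | IsConnected (K : Set X)} =
      {K : NonemptyCompacts X | IsPreconnected (K : Set X)} :=
    ext fun K => ⟨fun h => h.2, fun h => ⟨K.nonempty, h⟩⟩
  exact isCompact_iff_compactSpace.1
    (this ▸ NonemptyCompacts.isClosed_setOf_isPreconnected).isCompact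

instance : Singleton X (SubC X) where
  singleton x := ⟨{x}, by simpa using isConnected_singleton⟩

theorem singleton_le_iff {x : X} {C : SubC X} : {x} ≤ C ↔ x ∈ C.1 :=
  singleton_subset_iff

theorem isCompact_biUnion {𝒮 : Set (SubC X)} (h𝒮 : IsCompact 𝒮) :
    IsCompact (⋃ C ∈ 𝒮, (C.1 : Set X)) := by
  have := NonemptyCompacts.isCompact_biUnion_coe_of_isCompact (h𝒮.image continuous_subtype_val)
  rwa [biUnion_image] at this

theorem dist_le_of_le {C E : SubC X} (hCE : C ≤ E) {δ : ℝ} (hδ : 0 ≤ δ)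
    (h : ∀ x ∈ E.1, infDist x C.1 ≤ δ) : dist E C ≤ δ :=
  hausdorffDist_le_of_infDist hδ h fun x hx => by rw [infDist_zero_of_mem (hCE hx)]; exact hδ

theorem exists_sup_dist_le {F F₁ F₂ : SubC X} (h₁ : F ≤ F₁) (h₂ : F ≤ F₂) :
    ∃ G : SubC X, (G.1 : Set X) = (F₁.1 : Set X) ∪ F₂.1 ∧
      dist G F ≤ max (dist F₁ F) (dist F₂ F) := by
  obtain ⟨x, hx⟩ := F.1.nonempty
  refine ⟨⟨F₁.1 ⊔ F₂.1, ?_⟩, NonemptyCompacts.coe_sup _ _, ?_⟩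
  · rw [NonemptyCompacts.coe_sup]
    exact ⟨⟨x, Or.inl (h₁ hx)⟩, F₁.2.2.union x (h₁ hx) (h₂ hx) F₂.2.2⟩
  · have := NonemptyCompacts.lipschitz_sup.dist_le_mul (F₁.1, F₂.1) (F.1, F.1)
    simpa [Prod.dist_eq, Subtype.dist_eq] using this

theorem exists_lt_le_dist_le {C D : SubC X} (hCD : C < D) {δ : ℝ} (hδ : 0 < δ) :
    ∃ E : SubC X, C < E ∧ E ≤ D ∧ dist E C ≤ δ := by
  by_cases hD : ∀ x ∈ D.1, infDist x C.1 ≤ δ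
  · exact ⟨D, hCD, le_rfl, dist_le_of_le hCD.le hδ.le hD⟩
  push Not at hD
  obtain ⟨x₀, hx₀⟩ := C.1.nonempty
  set V : Set X := D.1 ∩ {y | infDist y C.1 ≤ δ}
  have hV : IsCompact V := D.1.isCompact.inter_right (isClosed_le (by fun_prop) (by fun_prop))
  have hCV : (C.1 : Set X) ⊆ V := fun y hy =>
    ⟨hCD.le hy, by rw [mem_ofPred_eq, infDist_zero_of_mem hy]; exact hδ.le⟩
  have hx₀V : x₀ ∈ V := hCV hx₀
  obtain ⟨w, hwE, hwδ⟩ := D.2.2.connectedComponentIn_diff_nonempty hV inter_subset_left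
    (isOpen_lt (continuous_infDist_pt _) continuous_const)
    (fun y hy => ⟨hy.1, (show infDist y C.1 < δ from hy.2).le⟩)
    (fun h => by obtain ⟨p, hp, hpδ⟩ := hD; exact lt_irrefl δ (hpδ.trans (h hp))) hx₀V
  let E : SubC X := ⟨⟨⟨_, hV.of_isClosed_subset (hV.isClosed.connectedComponentIn x₀)
    (connectedComponentIn_subset _ _)⟩, ⟨x₀, mem_connectedComponentIn hx₀V⟩⟩,
    isConnected_connectedComponentIn_iff.2 hx₀V⟩
  have hCE : C ≤ E := C.2.2.subset_connectedComponentIn hx₀ hCV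
  refine ⟨E, hCE.lt_of_not_ge fun hEC => ?_, fun y hy => (connectedComponentIn_subset _ _ hy).1,
    dist_le_of_le hCE hδ.le fun y hy => (connectedComponentIn_subset _ _ hy).2⟩
  exact hwδ (by rw [mem_ofPred_eq, infDist_zero_of_mem (hEC hwE)]; exact hδ)

end SubC

namespace IsWhitneyMap

variable {X : Type*} [MetricSpace X] {μ : SubC X → ℝ}

theorem strictMono (hμ : IsWhitneyMap μ) : StrictMono μ := fun A B h => hμ.2.2 A B h

theorem map_singleton (hμ : IsWhitneyMap μ) (x : X) : μ {x} = 0 := hμ.2.1 x {x} rfl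

variable [CompactSpace X]

-- A maximizer of `μ` on `Icc F D ∩ μ⁻¹ (Iic s)` has value `s`: otherwise boundary bumping
-- enlarges it within the set.
theorem exists_le_le_eq (hμ : IsWhitneyMap μ) {F D : SubC X} (hFD : F ≤ D) {s : ℝ}
    (hFs : μ F ≤ s) (hsD : s ≤ μ D) : ∃ C, F ≤ C ∧ C ≤ D ∧ μ C = s := by
  have hS : IsCompact (Icc F D ∩ μ ⁻¹' Iic s) :=
    (isClosed_Icc.inter (isClosed_Iic.preimage hμ.1)).isCompact
  obtain ⟨C, ⟨⟨hFC, hCD⟩, hCs⟩, hmax⟩ :=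
    hS.exists_isMaxOn ⟨F, ⟨le_rfl, hFD⟩, hFs⟩ hμ.1.continuousOn
  refine ⟨C, hFC, hCD, (eq_or_lt_of_le hCs).resolve_right fun hlt => ?_⟩
  obtain ⟨δ, hδ, hnear⟩ := Metric.eventually_nhds_iff.1
    (hμ.1.continuousAt.eventually_lt continuousAt_const hlt)
  obtain ⟨E, hCE, hED, hEC⟩ := SubC.exists_lt_le_dist_le
    (hCD.lt_of_ne (by rintro rfl; linarith)) (half_pos hδ)
  have hEs : μ E < s := hnear (hEC.trans_lt (half_lt_self hδ))
  exact (hμ.strictMono hCE).not_ge (hmax ⟨⟨hFC.trans hCE.le, hED⟩, hEs.le⟩)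

theorem exists_pos_forall_dist_lt (hμ : IsWhitneyMap μ) {η : ℝ} (hη : 0 < η) :
    ∃ δ > 0, ∀ F C : SubC X, F ≤ C → μ C - μ F ≤ δ → dist F C < η := by
  -- `μ p.2 - μ p.1` has a positive lower bound on the compact set of pairs `p.1 < p.2` at
  -- distance at least `η`.
  have hS : IsCompact {p : SubC X × SubC X | p.1 ≤ p.2 ∧ η ≤ dist p.1 p.2} :=
    ((isClosed_le continuous_fst continuous_snd).inter
      (isClosed_le continuous_const continuous_dist)).isCompact
  obtain ⟨a, ha, hle⟩ := hS.exists_forall_le'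
    (f := fun p : SubC X × SubC X => μ p.2 - μ p.1)
    ((hμ.1.comp continuous_snd).sub (hμ.1.comp continuous_fst)).continuousOn <|
    fun p ⟨hp, hpη⟩ => sub_pos.2 <| hμ.strictMono <| hp.lt_of_ne <| by
      rintro h; rw [h, dist_self] at hpη; linarith
  refine ⟨a / 2, half_pos ha, fun F C hFC hδ => not_le.1 fun hη => ?_⟩
  linarith [hle (F, C) ⟨hFC, hη⟩]

end IsWhitneyMap

section Chains

variable {α : Type*} [PseudoMetricSpace α]

def ChainStep (s : Set α) (ε : ℝ) (a b : α) : Prop :=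
  a ∈ s ∧ b ∈ s ∧ dist a b ≤ ε

theorem ChainStep.mono {s t : Set α} (hst : s ⊆ t) (ε : ℝ) : ChainStep s ε ≤ ChainStep t ε :=
  fun _ _ h => ⟨hst h.1, hst h.2.1, h.2.2⟩

def ChainConnected (s : Set α) (ε : ℝ) : Prop :=
  ∀ a ∈ s, ∀ b ∈ s, Relation.ReflTransGen (ChainStep s ε) a b

end Chains

-- A chain with steps shorter than the gap between `s ∩ u` and `v` cannot leave `u`.
theorem IsCompact.isPreconnected_of_chainConnected {α : Type*} [MetricSpace α] {s : Set α}
    (hs : IsCompact s) (h : ∀ ε > 0, ChainConnected s ε) : IsPreconnected s := by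
  have key : ∀ u v : Set α, IsClosed u → IsClosed v → s ⊆ u ∪ v → Disjoint u v →
      ∀ a ∈ s, a ∈ u → s ⊆ u := by
    intro u v hu hv hsuv huv a ha hau b hb
    obtain ⟨δ, hδ, hdisj⟩ :=
      (huv.mono_left inter_subset_right).exists_thickenings (hs.inter_right hu) hv
    induction h (δ / 2) (half_pos hδ) a ha b hb with
    | refl => exact hau
    | tail _ hcd ih =>
      obtain ⟨hc, hd, hcdδ⟩ := hcd
      refine (hsuv hd).resolve_right fun hdv =>
        disjoint_left.1 hdisj ?_ (self_subset_thickening hδ v hdv)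
      exact mem_thickening_iff.2 ⟨_, ⟨hc, ih hc⟩, by rw [dist_comm]; linarith⟩
  rw [isPreconnected_iff_subset_of_fully_disjoint_closed hs.isClosed]
  intro u v hu hv hsuv huv
  rcases s.eq_empty_or_nonempty with rfl | ⟨a, ha⟩
  · exact Or.inl (empty_subset u)
  rcases hsuv ha with hau | hav
  · exact Or.inl (key u v hu hv hsuv huv a ha hau)
  · exact Or.inr (key v u hv hu (union_comm u v ▸ hsuv) huv.symm a ha hav)

theorem SubC.isPreconnected_of_isPreconnected_inter_Ici {X : Type*} [MetricSpace X]
    {𝒲 : Set (SubC X)} (h𝒲 : IsCompact 𝒲) {K : Set X} (hK : IsPreconnected K)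
    (hsub : ∀ C ∈ 𝒲, (C.1 : Set X) ⊆ K) (hcover : ∀ x ∈ K, (𝒲 ∩ Ici {x}).Nonempty)
    (hfib : ∀ x ∈ K, IsPreconnected (𝒲 ∩ Ici {x})) : IsPreconnected 𝒲 := by
  rw [isPreconnected_iff_subset_of_fully_disjoint_closed h𝒲.isClosed]
  intro U V hU hV h𝒲UV hUV
  -- The unions `P`, `Q` of the members in `U`, resp. `V`, are closed and split `K`.
  set P := ⋃ C ∈ 𝒲 ∩ U, (C.1 : Set X)
  set Q := ⋃ C ∈ 𝒲 ∩ V, (C.1 : Set X)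
  have hPQ : ∀ x ∈ K, x ∈ P → x ∈ Q → False := by
    intro x hx hxP hxQ
    obtain ⟨C, ⟨hC𝒲, hCU⟩, hxC⟩ := mem_iUnion₂.1 hxP
    obtain ⟨C', ⟨hC'𝒲, hC'V⟩, hxC'⟩ := mem_iUnion₂.1 hxQ
    rcases isPreconnected_iff_subset_of_disjoint_closed.1 (hfib x hx) U V hU hV
      (fun D hD => h𝒲UV hD.1) (by rw [hUV.inter_eq, inter_empty]) with h | h
    · exact disjoint_left.1 hUV (h ⟨hC'𝒲, SubC.singleton_le_iff.2 hxC'⟩) hC'V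
    · exact disjoint_left.1 hUV hCU (h ⟨hC𝒲, SubC.singleton_le_iff.2 hxC⟩)
  have hKPQ : K ⊆ P ∪ Q := fun x hx => by
    obtain ⟨C, hC, hxC⟩ := hcover x hx
    rw [mem_Ici, SubC.singleton_le_iff] at hxC
    rcases h𝒲UV hC with hCU | hCV
    exacts [Or.inl (mem_biUnion ⟨hC, hCU⟩ hxC), Or.inr (mem_biUnion ⟨hC, hCV⟩ hxC)]
  rcases isPreconnected_iff_subset_of_disjoint_closed.1 hK P Q
    (SubC.isCompact_biUnion (h𝒲.inter_right hU)).isClosed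
    (SubC.isCompact_biUnion (h𝒲.inter_right hV)).isClosed hKPQ
    (eq_empty_of_forall_notMem fun x ⟨hx, hxP, hxQ⟩ => hPQ x hx hxP hxQ) with hKP | hKQ
  · refine Or.inl fun C hC => (h𝒲UV hC).resolve_right fun hCV => ?_
    obtain ⟨x, hx⟩ := C.1.nonempty
    exact hPQ x (hsub C hC hx) (hKP (hsub C hC hx)) (mem_biUnion ⟨hC, hCV⟩ hx)
  · refine Or.inr fun C hC => (h𝒲UV hC).resolve_left fun hCU => ?_
    obtain ⟨x, hx⟩ := C.1.nonempty
    exact hPQ x (hsub C hC hx) (mem_biUnion ⟨hC, hCU⟩ hx) (hKQ (hsub C hC hx))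

namespace IsWhitneyMap

variable {X : Type*} [MetricSpace X] [CompactSpace X] {μ : SubC X → ℝ}

theorem exists_pos_forall_sup_le (hμ : IsWhitneyMap μ) {δ₀ : ℝ} (hδ₀ : 0 < δ₀) :
    ∃ δ₁ > 0, δ₁ ≤ δ₀ ∧ ∀ F F₁ F₂ : SubC X, F ≤ F₁ → F ≤ F₂ → μ F₁ ≤ μ F + δ₁ →
      μ F₂ ≤ μ F + δ₁ →
        ∃ G : SubC X, (G.1 : Set X) = (F₁.1 : Set X) ∪ F₂.1 ∧ μ G ≤ μ F + δ₀ := by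
  obtain ⟨η, hη, hunif⟩ := Metric.uniformContinuous_iff.1
    (CompactSpace.uniformContinuous_of_continuous hμ.1) δ₀ hδ₀
  obtain ⟨δ₁, hδ₁, hclose⟩ := hμ.exists_pos_forall_dist_lt hη
  refine ⟨min δ₁ δ₀, lt_min hδ₁ hδ₀, min_le_right _ _, fun F F₁ F₂ h₁ h₂ hμ₁ hμ₂ => ?_⟩
  obtain ⟨G, hG, hGF⟩ := SubC.exists_sup_dist_le h₁ h₂
  have hd₁ := hclose F F₁ h₁ (by linarith [min_le_left δ₁ δ₀])
  have hd₂ := hclose F F₂ h₂ (by linarith [min_le_left δ₁ δ₀])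
  have hGF' := hunif (hGF.trans_lt (max_lt (by rwa [dist_comm]) (by rwa [dist_comm])))
  rw [Real.dist_eq] at hGF'
  exact ⟨G, hG, by linarith [le_abs_self (μ G - μ F)]⟩

theorem exists_pos_chainConnected_of_sub_le (hμ : IsWhitneyMap μ) {ε : ℝ} (hε : 0 < ε) :
    ∃ δ > 0, ∀ (t : ℝ) (K F : SubC X), t - μ F ≤ δ →
      ChainConnected (μ ⁻¹' {t} ∩ Iic K ∩ Ici F) ε := by
  obtain ⟨δ, hδ, hclose⟩ := hμ.exists_pos_forall_dist_lt (half_pos hε)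
  refine ⟨δ, hδ, fun t K F hF C hC C' hC' => .single ⟨hC, hC', ?_⟩⟩
  have h₁ := hclose F C hC.2 (by rw [hC.1.1]; exact hF)
  have h₂ := hclose F C' hC'.2 (by rw [hC'.1.1]; exact hF)
  linarith [dist_triangle_left C C' F]

/-- Two members `C, C'` of the level above `F` contain members `F₁, F₂` of a slightly higher
level above `F`; a member `E` above `F₁ ∪ F₂` then lies in both levels above `F₁` and `F₂`. -/
theorem exists_pos_chainConnected_of_forall_add (hμ : IsWhitneyMap μ) {δ₀ : ℝ}
    (hδ₀ : 0 < δ₀) :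
    ∃ δ₁ > 0, ∀ (t ε : ℝ) (K F : SubC X), μ F + δ₀ < t →
      (∀ F', F ≤ F' → μ F' = μ F + δ₁ → ChainConnected (μ ⁻¹' {t} ∩ Iic K ∩ Ici F') ε) →
      ChainConnected (μ ⁻¹' {t} ∩ Iic K ∩ Ici F) ε := by
  obtain ⟨δ₁, hδ₁, hδ₁₀, hsup⟩ := hμ.exists_pos_forall_sup_le hδ₀
  refine ⟨δ₁, hδ₁, fun t ε K F hF ih => ?_⟩
  rintro C ⟨⟨hCt : μ C = t, hCK⟩, hFC⟩ C' ⟨⟨hC't : μ C' = t, hC'K⟩, hFC'⟩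
  obtain ⟨F₁, hFF₁, hF₁C, hμF₁⟩ :=
    hμ.exists_le_le_eq hFC (le_add_of_nonneg_right hδ₁.le) (by linarith)
  obtain ⟨F₂, hFF₂, hF₂C', hμF₂⟩ :=
    hμ.exists_le_le_eq hFC' (le_add_of_nonneg_right hδ₁.le) (by linarith)
  obtain ⟨G, hG, hμG⟩ := hsup F F₁ F₂ hFF₁ hFF₂ hμF₁.le hμF₂.le
  have hF₁G : F₁ ≤ G := show (F₁.1 : Set X) ⊆ G.1 from hG ▸ subset_union_left
  have hF₂G : F₂ ≤ G := show (F₂.1 : Set X) ⊆ G.1 from hG ▸ subset_union_right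
  have hGK : G ≤ K := show (G.1 : Set X) ⊆ K.1 from
    hG ▸ union_subset (hF₁C.trans hCK) (hF₂C'.trans hC'K)
  obtain ⟨E, hGE, hEK, hμE⟩ :=
    hμ.exists_le_le_eq hGK (by linarith) (hCt ▸ hμ.strictMono.monotone hCK)
  have hsub : ∀ F' : SubC X, F ≤ F' →
      μ ⁻¹' {t} ∩ Iic K ∩ Ici F' ⊆ μ ⁻¹' {t} ∩ Iic K ∩ Ici F :=
    fun F' hFF' => inter_subset_inter_right _ (Ici_subset_Ici.2 hFF')
  exact .trans
    (.mono (ChainStep.mono (hsub F₁ hFF₁) ε) _ _ <|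
      ih F₁ hFF₁ hμF₁ C ⟨⟨hCt, hCK⟩, hF₁C⟩ E ⟨⟨hμE, hEK⟩, hF₁G.trans hGE⟩)
    (.mono (ChainStep.mono (hsub F₂ hFF₂) ε) _ _ <|
      ih F₂ hFF₂ hμF₂ E ⟨⟨hμE, hEK⟩, hF₂G.trans hGE⟩ C' ⟨⟨hC't, hC'K⟩, hF₂C'⟩)

theorem chainConnected (hμ : IsWhitneyMap μ) (t : ℝ) (K F : SubC X) {ε : ℝ} (hε : 0 < ε) :
    ChainConnected (μ ⁻¹' {t} ∩ Iic K ∩ Ici F) ε := by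
  obtain ⟨δ₀, hδ₀, base⟩ := hμ.exists_pos_chainConnected_of_sub_le hε
  obtain ⟨δ₁, hδ₁, step⟩ := hμ.exists_pos_chainConnected_of_forall_add hδ₀
  suffices ∀ n : ℕ, ∀ F, t - μ F ≤ δ₀ + n * δ₁ →
      ChainConnected (μ ⁻¹' {t} ∩ Iic K ∩ Ici F) ε by
    obtain ⟨n, hn⟩ := exists_nat_ge ((t - μ F) / δ₁)
    rw [div_le_iff₀ hδ₁] at hn
    exact this n F (by linarith)
  intro n
  induction n with
  | zero => simpa using base t K
  | succ n ih =>
    intro F hF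
    rcases le_or_gt (t - μ F) δ₀ with hsmall | hlarge
    · exact base t K F hsmall
    · exact step t ε K F (by linarith) fun F' _ hF' =>
        ih F' (by push_cast at hF; linarith)

theorem isCompact_preimage_inter_Iic (hμ : IsWhitneyMap μ) (t : ℝ) (K : SubC X) :
    IsCompact (μ ⁻¹' {t} ∩ Iic K) :=
  ((isClosed_singleton.preimage hμ.1).inter isClosed_Iic).isCompact

theorem nonempty_preimage_inter_Iic_inter_Ici (hμ : IsWhitneyMap μ) {t : ℝ} (ht : 0 ≤ t)
    {K : SubC X} (hKt : t ≤ μ K) {x : X} (hx : x ∈ K.1) :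
    (μ ⁻¹' {t} ∩ Iic K ∩ Ici {x}).Nonempty := by
  obtain ⟨C, hxC, hCK, hCt⟩ := hμ.exists_le_le_eq (SubC.singleton_le_iff.2 hx)
    (hμ.map_singleton x ▸ ht) hKt
  exact ⟨C, ⟨hCt, hCK⟩, hxC⟩

theorem isPreconnected_preimage_inter_Iic (hμ : IsWhitneyMap μ) {t : ℝ} (ht : 0 ≤ t)
    {K : SubC X} (hKt : t ≤ μ K) : IsPreconnected (μ ⁻¹' {t} ∩ Iic K) :=
  SubC.isPreconnected_of_isPreconnected_inter_Ici (hμ.isCompact_preimage_inter_Iic t K) K.2.2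
    (fun _ hC => hC.2) (fun _ hx => hμ.nonempty_preimage_inter_Iic_inter_Ici ht hKt hx)
    fun x _ => ((hμ.isCompact_preimage_inter_Iic t K).inter_right isClosed_Ici)
      |>.isPreconnected_of_chainConnected fun _ hε => hμ.chainConnected t K {x} hε

end IsWhitneyMap

theorem whitney_level_in_complement_is_subcontinuum_general
    {X : Type*} [MetricSpace X] [CompactSpace X]
    (μ : SubC X → ℝ) (hμ : IsWhitneyMap μ) (t : ℝ) (ht0 : 0 < t)
    (H : Set X)
    (K : SubC X) (hKH : (K.1 : Set X) = Hᶜ) (hKt : t < μ K) :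
    (Set.Nonempty {C : SubC X | μ C = t ∧ (C.1 : Set X) ⊆ Hᶜ}) ∧
      IsCompact {C : SubC X | μ C = t ∧ (C.1 : Set X) ⊆ Hᶜ} ∧
      IsConnected {C : SubC X | μ C = t ∧ (C.1 : Set X) ⊆ Hᶜ} := by
  have hlevel : {C : SubC X | μ C = t ∧ (C.1 : Set X) ⊆ Hᶜ} = μ ⁻¹' {t} ∩ Iic K := by
    rw [← hKH]
    rfl
  obtain ⟨x, hx⟩ := K.1.nonempty
  have hne : (μ ⁻¹' {t} ∩ Iic K).Nonempty :=
    (hμ.nonempty_preimage_inter_Iic_inter_Ici ht0.le hKt.le hx).mono inter_subset_left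
  rw [hlevel]
  exact ⟨hne, hμ.isCompact_preimage_inter_Iic t K, hne,
    hμ.isPreconnected_preimage_inter_Iic ht0.le hKt.le⟩

theorem whitney_level_in_complement_is_subcontinuum
    {X : Type*} [MetricSpace X] [CompactSpace X] [ConnectedSpace X] [Nonempty X]
    (μ : SubC X → ℝ) (hμ : IsWhitneyMap μ) (t : ℝ) (ht0 : 0 < t)
    (htX : t < μ (wholeC X))
    (H : Set X) (hH : IsOpen H)
    (K : SubC X) (hKH : (K.1 : Set X) = Hᶜ) (hKt : t < μ K) :
    (Set.Nonempty {C : SubC X | μ C = t ∧ (C.1 : Set X) ⊆ Hᶜ}) ∧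
      IsCompact {C : SubC X | μ C = t ∧ (C.1 : Set X) ⊆ Hᶜ} ∧
      IsConnected {C : SubC X | μ C = t ∧ (C.1 : Set X) ⊆ Hᶜ} :=
  whitney_level_in_complement_is_subcontinuum_general μ hμ t ht0 H K hKH hKt
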